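/- arXiv:0710.3226 — 11 statements merged into one kernel-verified Lean document; each statement's English description precedes it below -/
import Mathlib

section
/- Let P₁, P₂ be two points in the Euclidean plane with dist(P₁,P₂) = δ > 0, let R > 0, and let (cₙ)ₙ∈ℤ, (rₙ)ₙ∈ℤ be a lens chain for these data. Set bₙ = 1/rₙ, and let a = b₋₁, b = b₀, c = b₁ be the curvatures of three consecutive circles of the chain. Then, with α = (a·b + b·c + c·a)/b² − 1 and β = (b² − a·c)/b, the whole sequence of curvatures satisfies bₙ₊₁ = α·bₙ − bₙ₋₁ + β for every n ∈ ℤ. -/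
/-!
Each chain circle is equidistant from `P₁` and `P₂`, so all centres lie on the perpendicular
bisector of `P₁P₂`, which the area form identifies isometrically with `ℝ`, the midpoint going to
`0`. In this coordinate, tangency to the circle of radius `r₀` centred at `y₀` makes a neighbour's
radius an affine function of its position `y`, and `y` a root of a quadratic depending only on
`(y₀, r₀)`. The two neighbours are distinct roots, so Vieta gives the sum and product of their
radii, hence of their curvatures: `b₊ + b₋ = A b₀ + B` and `b₊ b₋ = b₀² - B b₀` with `A`, `B`
depending only on `R` and `δ`. The seed `a, b, c` then recovers `A` and `B`.
-/

open Module AffineSubspace RealInnerProductSpace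

theorem quadratic_vieta_of_ne {K : Type*} [CommRing K] [NoZeroDivisors K] {a b c x y : K}
    (hx : a * x ^ 2 + b * x + c = 0) (hy : a * y ^ 2 + b * y + c = 0) (hxy : x ≠ y) :
    a * (x + y) = -b ∧ a * (x * y) = c := by
  have hsum : a * (x + y) = -b := by
    have h : (x - y) * (a * (x + y) + b) = 0 := by linear_combination hx - hy
    linear_combination (mul_eq_zero.1 h).resolve_left (sub_ne_zero.2 hxy)
  exact ⟨hsum, by linear_combination x * hsum - hx⟩

section NeighborCircles

/- A circle of radius `r` centred on the bisector at signed position `y`, with `d` half the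
distance between the lens centres: `y ^ 2 + d ^ 2 = (R - r) ^ 2` is internal tangency to both
lens circles, and `(y₀ - y) ^ 2 = (r₀ + r) ^ 2` external tangency to the circle `(y₀, r₀)`. -/
variable {d R r₀ y₀ r y : ℝ}

theorem neighbor_radius_eq (h₀ : y₀ ^ 2 + d ^ 2 = (R - r₀) ^ 2) (h : y ^ 2 + d ^ 2 = (R - r) ^ 2)
    (ht : (y₀ - y) ^ 2 = (r₀ + r) ^ 2) :
    (R + r₀) * r = R * (R - r₀) - d ^ 2 - y₀ * y := by
  linear_combination (h - ht + h₀) / 2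

theorem neighbor_position_quadratic (h₀ : y₀ ^ 2 + d ^ 2 = (R - r₀) ^ 2)
    (h : y ^ 2 + d ^ 2 = (R - r) ^ 2) (ht : (y₀ - y) ^ 2 = (r₀ + r) ^ 2) :
    (4 * R * r₀ + d ^ 2) * y ^ 2 + -(2 * y₀ * (2 * R * r₀ + d ^ 2)) * y
      + ((R + r₀) ^ 2 * d ^ 2 - (2 * R * r₀ + d ^ 2) ^ 2) = 0 := by
  linear_combination (R + r₀) ^ 2 * h
    - ((R + r₀) * (R - r) + 2 * R * r₀ + d ^ 2 + y₀ * y) * neighbor_radius_eq h₀ h ht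
    + y ^ 2 * h₀

variable {r₁ r₂ y₁ y₂ : ℝ}

theorem neighbor_radii_vieta (hR : 0 < R) (hr₀ : 0 < r₀)
    (h₀ : y₀ ^ 2 + d ^ 2 = (R - r₀) ^ 2)
    (h₁ : y₁ ^ 2 + d ^ 2 = (R - r₁) ^ 2) (h₂ : y₂ ^ 2 + d ^ 2 = (R - r₂) ^ 2)
    (ht₁ : (y₀ - y₁) ^ 2 = (r₀ + r₁) ^ 2) (ht₂ : (y₀ - y₂) ^ 2 = (r₀ + r₂) ^ 2)
    (hy : y₁ ≠ y₂) :
    (4 * R * r₀ + d ^ 2) * (r₁ + r₂) = 2 * r₀ * (2 * R * (R - r₀) - d ^ 2) ∧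
      (4 * R * r₀ + d ^ 2) * (r₁ * r₂) = d ^ 2 * r₀ ^ 2 := by
  obtain ⟨hσ, hπ⟩ := quadratic_vieta_of_ne (neighbor_position_quadratic h₀ h₁ ht₁)
    (neighbor_position_quadratic h₀ h₂ ht₂) hy
  have e₁ := neighbor_radius_eq h₀ h₁ ht₁
  have e₂ := neighbor_radius_eq h₀ h₂ ht₂
  have hK : R + r₀ ≠ 0 := by positivity
  constructor
  · refine mul_left_cancel₀ hK ?_
    linear_combination (4 * R * r₀ + d ^ 2) * (e₁ + e₂) - y₀ * hσ
      - 2 * (2 * R * r₀ + d ^ 2) * h₀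
  · refine mul_left_cancel₀ (pow_ne_zero 2 hK) ?_
    linear_combination (4 * R * r₀ + d ^ 2) * ((R + r₀) * r₂ * e₁
      + (R * (R - r₀) - d ^ 2 - y₀ * y₁) * e₂) - (R * (R - r₀) - d ^ 2) * y₀ * hσ
      + y₀ ^ 2 * hπ
      + ((R + r₀) ^ 2 * d ^ 2 - (2 * R * r₀ + d ^ 2) ^ 2
        - 2 * (R * (R - r₀) - d ^ 2) * (2 * R * r₀ + d ^ 2)) * h₀

theorem neighbor_curvatures_vieta (hd : d ≠ 0) (hR : 0 < R) (hr₀ : 0 < r₀) (hr₁ : r₁ ≠ 0)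
    (hr₂ : r₂ ≠ 0) (h₀ : y₀ ^ 2 + d ^ 2 = (R - r₀) ^ 2)
    (h₁ : y₁ ^ 2 + d ^ 2 = (R - r₁) ^ 2) (h₂ : y₂ ^ 2 + d ^ 2 = (R - r₂) ^ 2)
    (ht₁ : (y₀ - y₁) ^ 2 = (r₀ + r₁) ^ 2) (ht₂ : (y₀ - y₂) ^ 2 = (r₀ + r₂) ^ 2)
    (hy : y₁ ≠ y₂) :
    r₁⁻¹ + r₂⁻¹ = (4 * R ^ 2 - 2 * d ^ 2) / d ^ 2 * r₀⁻¹ + -(4 * R / d ^ 2) ∧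
      r₁⁻¹ * r₂⁻¹ = r₀⁻¹ ^ 2 - -(4 * R / d ^ 2) * r₀⁻¹ := by
  obtain ⟨hsum, hprod⟩ := neighbor_radii_vieta hR hr₀ h₀ h₁ h₂ ht₁ ht₂ hy
  have hA : 4 * R * r₀ + d ^ 2 ≠ 0 := by positivity
  constructor
  · field_simp
    refine mul_left_cancel₀ hA ?_
    linear_combination d ^ 2 * r₀ * hsum - (4 * R ^ 2 - 2 * d ^ 2 - 4 * R * r₀) * hprod
  · field_simp
    linear_combination -hprod

end NeighborCircles

theorem seed_coeffs_eq {K : Type*} [Field K] {a b c A B : K} (hsum : c + a = A * b + B)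
    (hprod : c * a = b ^ 2 - B * b) (hb : b ≠ 0) :
    (a * b + b * c + c * a) / b ^ 2 - 1 = A ∧ (b ^ 2 - a * c) / b = B := by
  constructor
  · field_simp
    linear_combination b * hsum + hprod
  · field_simp
    linear_combination -hprod

namespace Orientation

variable {E : Type*} [NormedAddCommGroup E] [InnerProductSpace ℝ E] [Fact (finrank ℝ E = 2)]
  (o : Orientation ℝ E (Fin 2))

theorem norm_eq_abs_areaForm_div {v u : E} (hv : v ≠ 0) (h : ⟪v, u⟫ = 0) :
    ‖u‖ = |o.areaForm v u| / ‖v‖ := by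
  rw [o.abs_areaForm_of_orthogonal h, mul_div_cancel_left₀ _ (norm_ne_zero_iff.2 hv)]

noncomputable def bisectorCoord (p₁ p₂ x : E) : ℝ :=
  o.areaForm (p₂ - p₁) (x - midpoint ℝ p₁ p₂) / dist p₁ p₂

variable {o} {p₁ p₂ x y : E}

theorem dist_eq_abs_bisectorCoord_sub (h : p₁ ≠ p₂) (hx : x ∈ perpBisector p₁ p₂)
    (hy : y ∈ perpBisector p₁ p₂) :
    dist x y = |o.bisectorCoord p₁ p₂ x - o.bisectorCoord p₁ p₂ y| := by
  rw [mem_perpBisector_iff_inner_eq_zero', vsub_eq_sub, vsub_eq_sub] at hx hy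
  have hxy : x - y = (x - midpoint ℝ p₁ p₂) - (y - midpoint ℝ p₁ p₂) := by abel
  have horth : ⟪p₂ - p₁, x - y⟫ = 0 := by rw [hxy, inner_sub_right, hx, hy, sub_zero]
  rw [bisectorCoord, bisectorCoord, ← sub_div, ← map_sub, ← hxy,
    abs_div, abs_dist, dist_eq_norm, o.norm_eq_abs_areaForm_div (sub_ne_zero.2 h.symm) horth,
    dist_eq_norm']

theorem dist_sq_eq_bisectorCoord_sq_add (h : p₁ ≠ p₂) (hx : x ∈ perpBisector p₁ p₂) :
    dist x p₁ ^ 2 = o.bisectorCoord p₁ p₂ x ^ 2 + (dist p₁ p₂ / 2) ^ 2 := by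
  have hm : dist x (midpoint ℝ p₁ p₂) = |o.bisectorCoord p₁ p₂ x| := by
    rw [dist_eq_abs_bisectorCoord_sub h hx (midpoint_mem_perpBisector p₁ p₂), bisectorCoord,
      bisectorCoord, sub_self, map_zero, zero_div, sub_zero]
  rw [mem_perpBisector_iff_inner_eq_zero, vsub_eq_sub, vsub_eq_sub] at hx
  have horth : ⟪x - midpoint ℝ p₁ p₂, midpoint ℝ p₁ p₂ - p₁⟫ = 0 := by
    rw [midpoint_sub_left, inner_smul_right, hx, mul_zero]
  have hsplit : x - p₁ = (x - midpoint ℝ p₁ p₂) + (midpoint ℝ p₁ p₂ - p₁) := by abel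
  rw [dist_eq_norm, hsplit, sq, norm_add_sq_eq_norm_sq_add_norm_sq_real horth, ← dist_eq_norm,
    ← dist_eq_norm, hm, dist_midpoint_left, abs_mul_abs_self, Real.norm_ofNat]
  ring

end Orientation

/-- For a lens chain, with `a = b (-1)`, `b₀ = b 0`, `c = b 1` three
consecutive curvatures, the whole sequence of curvatures satisfies the inhomogeneous
three-term recurrence `b (n+1) = α * b n - b (n-1) + β` with
`α = (a·b₀ + b₀·c + c·a)/b₀² - 1` and `β = (b₀² - a·c)/b₀`. -/
theorem lens_chain_seed_recurrence
    (P₁ P₂ : EuclideanSpace ℝ (Fin 2)) (δ R : ℝ)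
    (hδ : dist P₁ P₂ = δ) (hδpos : 0 < δ) (hR : 0 < R)
    (ctr : ℤ → EuclideanSpace ℝ (Fin 2)) (r : ℤ → ℝ)
    (hr : ∀ n, 0 < r n)
    (htan₁ : ∀ n, dist (ctr n) P₁ = R - r n)
    (htan₂ : ∀ n, dist (ctr n) P₂ = R - r n)
    (hext : ∀ n, dist (ctr n) (ctr (n + 1)) = r n + r (n + 1))
    (hne : ∀ n, ctr (n + 1) ≠ ctr (n - 1))
    (b : ℤ → ℝ) (hb : ∀ n, b n = 1 / r n)
    (a b₀ c α β : ℝ)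
    (ha : a = b (-1)) (hb₀ : b₀ = b 0) (hc : c = b 1)
    (hα : α = (a * b₀ + b₀ * c + c * a) / b₀ ^ 2 - 1)
    (hβ : β = (b₀ ^ 2 - a * c) / b₀) :
    ∀ n : ℤ, b (n + 1) = α * b n - b (n - 1) + β := by
  have hP : P₁ ≠ P₂ := dist_pos.1 (hδ ▸ hδpos)
  have : Fact (finrank ℝ (EuclideanSpace ℝ (Fin 2)) = 2) := ⟨finrank_euclideanSpace_fin⟩
  let o := (EuclideanSpace.basisFun (Fin 2) ℝ).toBasis.orientation
  let y n := o.bisectorCoord P₁ P₂ (ctr n)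
  have hmem n : ctr n ∈ perpBisector P₁ P₂ :=
    mem_perpBisector_iff_dist_eq.2 ((htan₁ n).trans (htan₂ n).symm)
  have hpos n : y n ^ 2 + (δ / 2) ^ 2 = (R - r n) ^ 2 := by
    rw [← htan₁ n, ← hδ, Orientation.dist_sq_eq_bisectorCoord_sq_add hP (hmem n)]
  have htouch n : (y n - y (n + 1)) ^ 2 = (r n + r (n + 1)) ^ 2 := by
    rw [← hext n, Orientation.dist_eq_abs_bisectorCoord_sub hP (hmem n) (hmem (n + 1)), sq_abs]
  have htouch_pred n : (y n - y (n - 1)) ^ 2 = (r n + r (n - 1)) ^ 2 := by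
    have h := htouch (n - 1)
    rw [sub_add_cancel] at h
    linear_combination h
  have hsep n : y (n + 1) ≠ y (n - 1) := fun h ↦ hne n <| dist_eq_zero.1 <| by
    rw [Orientation.dist_eq_abs_bisectorCoord_sub hP (hmem _) (hmem _)]
    exact abs_eq_zero.2 (sub_eq_zero.2 h)
  have hrel n := neighbor_curvatures_vieta (by positivity : δ / 2 ≠ 0) hR (hr n)
    (hr (n + 1)).ne' (hr (n - 1)).ne' (hpos n) (hpos (n + 1)) (hpos (n - 1)) (htouch n)
    (htouch_pred n) (hsep n)
  simp only [← one_div, ← hb] at hrel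
  obtain ⟨hαA, hβB⟩ := seed_coeffs_eq (hrel 0).1 (hrel 0).2 (by simp [hb, (hr 0).ne'])
  simp only [zero_add, zero_sub] at hαA hβB
  intro n
  rw [hα, hβ, ha, hb₀, hc, hαA, hβB]
  linarith [(hrel n).1]
end

section
/- Let b : ℤ → ℚ satisfy the lens recurrence b(n+1) = α·b(n) − b(n−1) + β for all n ∈ ℤ, where b(0) ≠ 0, α = (b(−1)·b(0) + b(0)·b(1) + b(1)·b(−1))/b(0)² − 1 and β = (b(0)² − b(−1)·b(1))/b(0). Then every pair of consecutive terms satisfies the compatibility condition: for all n ∈ ℤ, b(n)² + b(n+1)² = α·b(n)·b(n+1) + β·(b(n) + b(n+1)). -/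
/-! The quantity `Q(x, y) = x² + y² - α x y - β (x + y)` is invariant along the recurrence:
if `z = α y - x + β` then `Q(y, z) - Q(x, y) = (z - x)(z + x - α y - β) = 0`, so `Q(b n, b (n + 1))`
does not depend on `n`. The given `α` and `β` make `Q(b 0, b 1) = 0` an identity in `b (-1)`, `b 0`,
`b 1`, hence `Q` vanishes on every pair of consecutive terms. -/

section LensForm

variable {R : Type*} [CommRing R]

def lensForm (α β x y : R) : R := x ^ 2 + y ^ 2 - α * x * y - β * (x + y)

theorem lensForm_eq_of_eq_add {α β x y z : R} (h : z = α * y - x + β) :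
    lensForm α β y z = lensForm α β x y := by
  unfold lensForm
  linear_combination (z - x) * h

theorem lensForm_eq_lensForm_zero_one {α β : R} {b : ℤ → R}
    (hrec : ∀ n : ℤ, b (n + 1) = α * b n - b (n - 1) + β) (n : ℤ) :
    lensForm α β (b n) (b (n + 1)) = lensForm α β (b 0) (b 1) := by
  have hperiodic : Function.Periodic (fun m => lensForm α β (b m) (b (m + 1))) 1 := fun m => by
    simpa [add_assoc] using lensForm_eq_of_eq_add (hrec (m + 1))
  simpa using hperiodic.int_mul n 0

end LensForm

theorem lensForm_eq_zero {K : Type*} [Field K] {x y z : K} (hy : y ≠ 0) :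
    lensForm ((x * y + y * z + z * x) / y ^ 2 - 1) ((y ^ 2 - x * z) / y) y z = 0 := by
  unfold lensForm
  field_simp
  ring

/-- If `b : ℤ → ℚ` satisfies the lens recurrence with constants
`α = (b(-1)·b(0) + b(0)·b(1) + b(1)·b(-1))/b(0)² - 1` and `β = (b(0)² - b(-1)·b(1))/b(0)`
(where `b 0 ≠ 0`), then every pair of consecutive terms satisfies the compatibility
condition. -/
theorem lens_recurrence_compatibility
    (b : ℤ → ℚ) (α β : ℚ) (hb0 : b 0 ≠ 0)
    (hα : α = (b (-1) * b 0 + b 0 * b 1 + b 1 * b (-1)) / (b 0) ^ 2 - 1)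
    (hβ : β = ((b 0) ^ 2 - b (-1) * b 1) / b 0)
    (hrec : ∀ n : ℤ, b (n + 1) = α * b n - b (n - 1) + β) :
    ∀ n : ℤ, (b n) ^ 2 + (b (n + 1)) ^ 2 = α * b n * b (n + 1) + β * (b n + b (n + 1)) := by
  intro n
  have hzero : lensForm α β (b 0) (b 1) = 0 := by
    rw [hα, hβ]
    exact lensForm_eq_zero hb0
  have h := (lensForm_eq_lensForm_zero_one hrec n).trans hzero
  unfold lensForm at h
  linear_combination h
end

section
/- Let b : ℤ → ℚ with b(n) ≠ 0 for all n satisfy the lens recurrence b(n+1) = α·b(n) − b(n−1) + β for all n ∈ ℤ, and suppose the compatibility condition b(n₀)² + b(n₀+1)² = α·b(n₀)·b(n₀+1) + β·(b(n₀) + b(n₀+1)) holds at some index n₀. Then for every n ∈ ℤ the constants are recovered from any three consecutive terms: β = (b(n)² − b(n−1)·b(n+1))/b(n) and α = (b(n−1)·b(n) + b(n)·b(n+1) + b(n+1)·b(n−1))/b(n)² − 1. -/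
/-!
The compatibility defect `b(n)² + b(n+1)² − α b(n) b(n+1) − β (b(n) + b(n+1))` changes from
index `n − 1` to `n` by `(b(n+1) − b(n−1)) (b(n+1) + b(n−1) − α b(n) − β)`, which the recurrence
kills. So the defect is constant, hence zero at every index once it vanishes at `n₀`. Subtracting
`b(n−1)` times the recurrence from the vanishing defect at `n − 1` leaves `β b(n) = b(n)² − b(n−1) b(n+1)`,
and feeding this back into `b(n)` times the recurrence gives the formula for `α`.
-/

section LensRecurrence

variable {R : Type*} [CommRing R]

def IsLensRecurrence (α β : R) (b : ℤ → R) : Prop :=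
  ∀ n : ℤ, b (n + 1) = α * b n - b (n - 1) + β

def lensDefect (α β : R) (b : ℤ → R) (n : ℤ) : R :=
  b n ^ 2 + b (n + 1) ^ 2 - α * b n * b (n + 1) - β * (b n + b (n + 1))

theorem IsLensRecurrence.lensDefect_periodic {α β : R} {b : ℤ → R}
    (h : IsLensRecurrence α β b) : Function.Periodic (lensDefect α β b) 1 := by
  intro n
  have hrec := h (n + 1)
  rw [add_sub_cancel_right] at hrec
  unfold lensDefect
  linear_combination (b (n + 1 + 1) - b n) * hrec

theorem IsLensRecurrence.lensDefect_eq {α β : R} {b : ℤ → R}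
    (h : IsLensRecurrence α β b) (m n : ℤ) : lensDefect α β b m = lensDefect α β b n := by
  have hper := h.lensDefect_periodic
  simpa using (hper.int_mul_eq m).trans (hper.int_mul_eq n).symm

theorem IsLensRecurrence.mul_eq_of_lensDefect_eq_zero {α β : R} {b : ℤ → R}
    (h : IsLensRecurrence α β b) {n : ℤ} (hdef : lensDefect α β b (n - 1) = 0) :
    β * b n = b n ^ 2 - b (n - 1) * b (n + 1) ∧
      α * b n ^ 2 = b (n - 1) * b n + b n * b (n + 1) + b (n + 1) * b (n - 1) - b n ^ 2 := by
  unfold lensDefect at hdef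
  rw [sub_add_cancel] at hdef
  have hβ : β * b n = b n ^ 2 - b (n - 1) * b (n + 1) := by
    linear_combination b (n - 1) * h n - hdef
  exact ⟨hβ, by linear_combination -b n * h n - hβ⟩

end LensRecurrence

/-- If a nowhere-vanishing sequence satisfies the lens recurrence and the
compatibility condition holds at some index, then the constants `α`, `β` are recovered
from any three consecutive terms. -/
theorem lens_recurrence_constants_recovered
    (b : ℤ → ℚ) (α β : ℚ) (hb : ∀ n : ℤ, b n ≠ 0)
    (hrec : ∀ n : ℤ, b (n + 1) = α * b n - b (n - 1) + β)
    (n₀ : ℤ)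
    (hcomp : (b n₀) ^ 2 + (b (n₀ + 1)) ^ 2
      = α * b n₀ * b (n₀ + 1) + β * (b n₀ + b (n₀ + 1))) :
    ∀ n : ℤ,
      β = ((b n) ^ 2 - b (n - 1) * b (n + 1)) / b n ∧
      α = (b (n - 1) * b n + b n * b (n + 1) + b (n + 1) * b (n - 1)) / (b n) ^ 2 - 1 := by
  have hlens : IsLensRecurrence α β b := hrec
  have hdef₀ : lensDefect α β b n₀ = 0 := by
    unfold lensDefect
    linear_combination hcomp
  intro n
  obtain ⟨hβ, hα⟩ :=
    hlens.mul_eq_of_lensDefect_eq_zero ((hlens.lensDefect_eq (n - 1) n₀).trans hdef₀)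
  constructor
  · rwa [eq_div_iff (hb n)]
  · rw [eq_sub_iff_add_eq, eq_div_iff (pow_ne_zero 2 (hb n))]
    linear_combination hα
end

section
/- Let b : ℤ → ℝ satisfy the lens recurrence b(n+1) = α·b(n) − b(n−1) + β for all n ∈ ℤ, with α > 2. Set w = (b(−1) − 2·b(0) + b(1))/(2(α − 2)) + (b(1) − b(−1))/(2·√(α² − 4)) and assume w > 0. Then the ratios of consecutive terms converge: b(n+1)/b(n) → (α + √(α² − 4))/2 as n → +∞. -/
/-!
The roots of `x² - α x + 1` are `λ` and `λ⁻¹`, and `β / (2 - α)` is a constant solution, so every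
lens sequence has the Binet form `b n = w λⁿ + w' λ⁻ⁿ + β / (2 - α)`; fitting `b 0` and `b 1`
gives the coefficient `w` of the statement. Since `λ > 1`, `b n / λⁿ → w ≠ 0`, hence
`b (n + 1) / b n = λ · (b (n + 1) / λⁿ⁺¹) / (b n / λⁿ) → λ`.
-/

open Filter Topology

noncomputable def lensCharConst (α : ℝ) : ℝ := (α + √(α ^ 2 - 4)) / 2

theorem lensCharConst_mul_conj {α : ℝ} (hα : 4 ≤ α ^ 2) :
    lensCharConst α * ((α - √(α ^ 2 - 4)) / 2) = 1 := by
  have hs : √(α ^ 2 - 4) ^ 2 = α ^ 2 - 4 := Real.sq_sqrt (by linarith)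
  rw [lensCharConst]
  linear_combination -hs / 4

theorem lensCharConst_ne_zero {α : ℝ} (hα : 4 ≤ α ^ 2) : lensCharConst α ≠ 0 :=
  left_ne_zero_of_mul_eq_one (lensCharConst_mul_conj hα)

theorem lensCharConst_inv {α : ℝ} (hα : 4 ≤ α ^ 2) :
    (lensCharConst α)⁻¹ = (α - √(α ^ 2 - 4)) / 2 :=
  inv_eq_of_mul_eq_one_right (lensCharConst_mul_conj hα)

theorem lensCharConst_add_inv {α : ℝ} (hα : 4 ≤ α ^ 2) :
    lensCharConst α + (lensCharConst α)⁻¹ = α := by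
  rw [lensCharConst_inv hα, lensCharConst]
  ring

theorem one_lt_lensCharConst {α : ℝ} (hα : 2 < α) : 1 < lensCharConst α := by
  have := Real.sqrt_nonneg (α ^ 2 - 4)
  rw [lensCharConst]
  linarith

theorem eq_of_lens_recurrence {R : Type*} [CommRing R] {f g : ℤ → R} {α β : R}
    (hf : ∀ n, f (n + 1) = α * f n - f (n - 1) + β)
    (hg : ∀ n, g (n + 1) = α * g n - g (n - 1) + β)
    (h0 : f 0 = g 0) (h1 : f 1 = g 1) : f = g := by
  suffices h : ∀ n, f n = g n ∧ f (n + 1) = g (n + 1) from funext fun n => (h n).1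
  intro n
  induction n using Int.induction_on with
  | zero => exact ⟨h0, h1⟩
  | succ n ih =>
    refine ⟨ih.2, ?_⟩
    have hfn := hf (n + 1)
    have hgn := hg (n + 1)
    simp only [add_sub_cancel_right] at hfn hgn
    rw [hfn, hgn, ih.1, ih.2]
  | pred n ih =>
    refine ⟨?_, by simpa using ih.1⟩
    have hfn := hf (-n)
    have hgn := hg (-n)
    linear_combination hfn - hgn + α * ih.1 - ih.2

def binetSeq {K : Type*} [Field K] (l c d p : K) (n : ℤ) : K := c * l ^ n + d * l⁻¹ ^ n + p

theorem binetSeq_lens_recurrence {K : Type*} [Field K] {l α β : K} (hl0 : l ≠ 0)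
    (hl : l + l⁻¹ = α) (hα : α ≠ 2) (c d : K) (n : ℤ) :
    binetSeq l c d (β / (2 - α)) (n + 1)
      = α * binetSeq l c d (β / (2 - α)) n - binetSeq l c d (β / (2 - α)) (n - 1) + β := by
  have hp : (2 - α) * (β / (2 - α)) = β := mul_div_cancel₀ β (sub_ne_zero.2 hα.symm)
  simp only [binetSeq]
  rw [zpow_add_one₀ hl0, zpow_sub_one₀ hl0, zpow_add_one₀ (inv_ne_zero hl0),
    zpow_sub_one₀ (inv_ne_zero hl0), inv_inv]
  linear_combination (c * l ^ n + d * l⁻¹ ^ n) * hl + hp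

theorem eq_binetSeq_of_lens_recurrence {b : ℤ → ℝ} {α β : ℝ}
    (hrec : ∀ n : ℤ, b (n + 1) = α * b n - b (n - 1) + β) (hα : 4 < α ^ 2) :
    b = binetSeq (lensCharConst α)
      ((b (-1) - 2 * b 0 + b 1) / (2 * (α - 2)) + (b 1 - b (-1)) / (2 * √(α ^ 2 - 4)))
      ((b (-1) - 2 * b 0 + b 1) / (2 * (α - 2)) - (b 1 - b (-1)) / (2 * √(α ^ 2 - 4)))
      (β / (2 - α)) := by
  have hs : √(α ^ 2 - 4) ≠ 0 := (Real.sqrt_pos.2 (by linarith)).ne'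
  have hα2 : α ≠ 2 := by rintro rfl; norm_num at hα
  have hα2' : α - 2 ≠ 0 := sub_ne_zero.2 hα2
  have h2α : 2 - α ≠ 0 := sub_ne_zero.2 hα2.symm
  have hb1 : b 1 = α * b 0 - b (-1) + β := by simpa using hrec 0
  refine eq_of_lens_recurrence hrec
    (binetSeq_lens_recurrence (lensCharConst_ne_zero hα.le) (lensCharConst_add_inv hα.le) hα2 _ _)
    ?_ ?_
  · simp only [binetSeq, zpow_zero, mul_one]
    rw [hb1]
    field_simp
    ring
  · simp only [binetSeq, zpow_one]
    rw [lensCharConst_inv hα.le, lensCharConst, hb1]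
    field_simp
    ring

theorem tendsto_zpow_atTop_nhds_zero_of_norm_lt_one {𝕜 : Type*} [NormedField 𝕜] {r : 𝕜}
    (hr : ‖r‖ < 1) : Tendsto (fun n : ℤ => r ^ n) atTop (𝓝 0) := by
  have htoNat : Tendsto Int.toNat atTop atTop :=
    tendsto_atTop_atTop.2 fun k => ⟨k, fun n hn => by omega⟩
  refine ((tendsto_pow_atTop_nhds_zero_of_norm_lt_one hr).comp htoNat).congr' ?_
  filter_upwards [eventually_ge_atTop 0] with n hn
  simp [← zpow_natCast, Int.toNat_of_nonneg hn]

theorem tendsto_binetSeq_div_zpow {𝕜 : Type*} [NormedField 𝕜] {l : 𝕜} (hl : 1 < ‖l‖) (c d p : 𝕜) :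
    Tendsto (fun n : ℤ => binetSeq l c d p n / l ^ n) atTop (𝓝 c) := by
  have hl0 : l ≠ 0 := norm_pos_iff.1 (one_pos.trans hl)
  have hdecay : Tendsto (fun n : ℤ => l⁻¹ ^ n) atTop (𝓝 0) :=
    tendsto_zpow_atTop_nhds_zero_of_norm_lt_one (by rw [norm_inv]; exact inv_lt_one_of_one_lt₀ hl)
  have hlim : Tendsto (fun n : ℤ => c + d * (l⁻¹ ^ n) ^ 2 + p * l⁻¹ ^ n) atTop (𝓝 c) := by
    simpa using (tendsto_const_nhds.add ((hdecay.pow 2).const_mul d)).add (hdecay.const_mul p)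
  refine hlim.congr fun n => ?_
  rw [binetSeq, inv_zpow', zpow_neg]
  have := zpow_ne_zero n hl0
  field_simp

theorem Filter.Tendsto.succ_div_of_div_zpow {𝕜 : Type*} [NormedField 𝕜] {b : ℤ → 𝕜} {l c : 𝕜}
    (hl : l ≠ 0) (hc : c ≠ 0) (h : Tendsto (fun n => b n / l ^ n) atTop (𝓝 c)) :
    Tendsto (fun n => b (n + 1) / b n) atTop (𝓝 l) := by
  have hsucc := h.comp (tendsto_atTop_add_const_right atTop 1 tendsto_id)
  have hlim := (hsucc.const_mul l).div h hc
  rw [mul_div_cancel_right₀ l hc] at hlim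
  refine hlim.congr fun n => ?_
  simp only [Pi.div_apply, Function.comp_apply, id]
  rw [zpow_add_one₀ hl]
  have := zpow_ne_zero n hl
  field_simp

/-- If `α > 2` and the Binet coefficient `w` is positive, then the ratios of
consecutive terms of a lens sequence converge to the characteristic constant
`λ = (α + √(α² - 4))/2`. -/
theorem lens_recurrence_ratio_limit
    (b : ℤ → ℝ) (α β : ℝ)
    (hrec : ∀ n : ℤ, b (n + 1) = α * b n - b (n - 1) + β)
    (hα : α > 2)
    (w : ℝ)
    (hw : w = (b (-1) - 2 * b 0 + b 1) / (2 * (α - 2))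
      + (b 1 - b (-1)) / (2 * Real.sqrt (α ^ 2 - 4)))
    (hwpos : w > 0) :
    Filter.Tendsto (fun n : ℤ => b (n + 1) / b n) Filter.atTop
      (nhds ((α + Real.sqrt (α ^ 2 - 4)) / 2)) := by
  have hl := one_lt_lensCharConst hα
  refine Tendsto.succ_div_of_div_zpow (one_pos.trans hl).ne' hwpos.ne' ?_
  rw [eq_binetSeq_of_lens_recurrence hrec (by nlinarith), ← hw]
  exact tendsto_binetSeq_div_zpow (by rwa [Real.norm_of_nonneg (by linarith)]) _ _ _
end

section
/- Let a, b, c ∈ ℤ with b ≠ 0, and suppose b divides a·c and b² divides a·b + b·c + c·a. Then α = (a·b + b·c + c·a)/b² − 1 and β = (b² − a·c)/b are integers, and the bilateral sequence x : ℤ → ℚ determined by x(0) = a, x(1) = b and the lens recurrence x(n+1) = α·x(n) − x(n−1) + β (for all n ∈ ℤ) takes a value in ℤ at every index n ∈ ℤ. -/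
/-!
Divisibility makes `α` and `β` integers, and a second-order recurrence with integral
coefficients can be run forwards (`x (n+1) = α x n - x (n-1) + β`) and, since the coefficient
of `x (n-1)` is a unit, backwards (`x (n-1) = α x n - x (n+1) + β`). Both directions preserve
integrality, so the two integral initial values propagate to all of `ℤ`.
-/

theorem Int.induction_two_step {P : ℤ → Prop} (h0 : P 0) (h1 : P 1)
    (up : ∀ n, P (n - 1) → P n → P (n + 1)) (down : ∀ n, P n → P (n + 1) → P (n - 1)) :
    ∀ n, P n := by
  have forward : ∀ k : ℕ, P k ∧ P (k + 1) := by
    intro k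
    induction k with
    | zero => exact ⟨h0, h1⟩
    | succ k ih =>
      refine ⟨by exact_mod_cast ih.2, ?_⟩
      simpa using up (k + 1) (by simpa using ih.1) (by exact_mod_cast ih.2)
  have backward : ∀ k : ℕ, P (-k) ∧ P (-k + 1) := by
    intro k
    induction k with
    | zero => exact ⟨h0, h1⟩
    | succ k ih =>
      refine ⟨?_, by simpa using ih.1⟩
      simpa [sub_eq_add_neg, add_comm] using down (-k) ih.1 ih.2
  intro n
  obtain ⟨k, rfl | rfl⟩ := Int.eq_nat_or_neg n
  · exact (forward k).1
  · exact (backward k).1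

theorem mem_subring_of_lens_recurrence {R : Type*} [Ring R] (S : Subring R) {α β : R}
    (hα : α ∈ S) (hβ : β ∈ S) (x : ℤ → R) (h0 : x 0 ∈ S) (h1 : x 1 ∈ S)
    (hrec : ∀ n, x (n + 1) = α * x n - x (n - 1) + β) : ∀ n, x n ∈ S := by
  refine Int.induction_two_step h0 h1 (fun n hprev hn => ?_) (fun n hn hnext => ?_)
  · rw [hrec n]
    exact add_mem (sub_mem (mul_mem hα hn) hprev) hβ
  · have hback : x (n - 1) = α * x n - x (n + 1) + β := by rw [hrec n]; abel
    rw [hback]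
    exact add_mem (sub_mem (mul_mem hα hn) hnext) hβ

theorem lens_sequence_integrality_criterion_one_general
    (a b c : ℤ)
    (h1 : b ∣ a * c) (h2 : b ^ 2 ∣ a * b + b * c + c * a) :
    (∃ A : ℤ, ((a : ℚ) * b + b * c + c * a) / (b : ℚ) ^ 2 - 1 = (A : ℚ)) ∧
    (∃ B : ℤ, ((b : ℚ) ^ 2 - (a : ℚ) * c) / (b : ℚ) = (B : ℚ)) ∧
    ∀ x : ℤ → ℚ, x 0 = (a : ℚ) → x 1 = (b : ℚ) →
      (∀ n : ℤ, x (n + 1) = (((a : ℚ) * b + b * c + c * a) / (b : ℚ) ^ 2 - 1) * x n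
        - x (n - 1) + ((b : ℚ) ^ 2 - (a : ℚ) * c) / (b : ℚ)) →
      ∀ n : ℤ, ∃ m : ℤ, x n = (m : ℚ) := by
  have hα : ((a : ℚ) * b + b * c + c * a) / (b : ℚ) ^ 2 - 1
      = (((a * b + b * c + c * a) / b ^ 2 - 1 : ℤ) : ℚ) := by
    push_cast [Int.cast_div_charZero h2]
    rfl
  have hβ : ((b : ℚ) ^ 2 - (a : ℚ) * c) / (b : ℚ) = (((b ^ 2 - a * c) / b : ℤ) : ℚ) := by
    push_cast [Int.cast_div_charZero ((dvd_pow_self b two_ne_zero).sub h1)]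
    rfl
  refine ⟨⟨_, hα⟩, ⟨_, hβ⟩, fun x hx0 hx1 hrec n => ?_⟩
  have hZ := mem_subring_of_lens_recurrence (Int.castRingHom ℚ).range
    ⟨_, hα.symm⟩ ⟨_, hβ.symm⟩ x ⟨a, hx0.symm⟩ ⟨b, hx1.symm⟩ hrec
  obtain ⟨m, hm⟩ := hZ n
  exact ⟨m, hm.symm⟩

/-- Integrality Criterion 1: If `b ∣ a·c` and `b² ∣ a·b + b·c + c·a`, then
the constants `α`, `β` of the seed `(a,b,c)` are integers and the lens sequence extended
from the seed takes integer values everywhere. -/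
theorem lens_sequence_integrality_criterion_one
    (a b c : ℤ) (hb : b ≠ 0)
    (h1 : b ∣ a * c) (h2 : b ^ 2 ∣ a * b + b * c + c * a) :
    (∃ A : ℤ, ((a : ℚ) * b + b * c + c * a) / (b : ℚ) ^ 2 - 1 = (A : ℚ)) ∧
    (∃ B : ℤ, ((b : ℚ) ^ 2 - (a : ℚ) * c) / (b : ℚ) = (B : ℚ)) ∧
    ∀ x : ℤ → ℚ, x 0 = (a : ℚ) → x 1 = (b : ℚ) →
      (∀ n : ℤ, x (n + 1) = (((a : ℚ) * b + b * c + c * a) / (b : ℚ) ^ 2 - 1) * x n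
        - x (n - 1) + ((b : ℚ) ^ 2 - (a : ℚ) * c) / (b : ℚ)) →
      ∀ n : ℤ, ∃ m : ℤ, x n = (m : ℚ) :=
  lens_sequence_integrality_criterion_one_general a b c h1 h2
end

section
/- Let b : ℤ → ℤ and α, β ∈ ℤ satisfy b(n+1) = α·b(n) − b(n−1) + β for all n ∈ ℤ. Then the greatest common divisor of three consecutive terms is independent of the position: for all k, l ∈ ℤ, gcd(gcd(b(k), b(k+1)), b(k+2)) = gcd(gcd(b(l), b(l+1)), b(l+2)). -/
/-! Eliminating `β` between two consecutive instances of the recurrence gives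
`b (n + 3) = b n + (α + 1) * (b (n + 2) - b (n + 1))`. The coefficient of `b n` is `1`, so this
can be solved for `b n` as well as for `b (n + 3)`: the common divisors of
`b n, b (n + 1), b (n + 2)` and of `b (n + 1), b (n + 2), b (n + 3)` coincide, and so do their gcds. -/

section LensSequence

variable {R : Type*} [CommRing R] {b : ℤ → R} {α β : R}

theorem lens_add_three (hrec : ∀ n : ℤ, b (n + 1) = α * b n - b (n - 1) + β) (n : ℤ) :
    b (n + 3) = b n + (α + 1) * (b (n + 2) - b (n + 1)) := by
  have h₂ := hrec (n + 1)
  have h₃ := hrec (n + 2)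
  rw [show n + 1 + 1 = n + 2 by ring, add_sub_cancel_right] at h₂
  rw [show n + 2 + 1 = n + 3 by ring, show n + 2 - 1 = n + 1 by ring] at h₃
  linear_combination h₃ - h₂

theorem dvd_three_consecutive_iff_add_one (hrec : ∀ n : ℤ, b (n + 1) = α * b n - b (n - 1) + β)
    (d : R) (n : ℤ) :
    (d ∣ b n ∧ d ∣ b (n + 1) ∧ d ∣ b (n + 2)) ↔
      (d ∣ b (n + 1) ∧ d ∣ b (n + 2) ∧ d ∣ b (n + 3)) := by
  have h := lens_add_three hrec n
  have h' : b n = b (n + 3) - (α + 1) * (b (n + 2) - b (n + 1)) := by rw [h]; ring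
  constructor
  · rintro ⟨h₀, h₁, h₂⟩
    exact ⟨h₁, h₂, h ▸ h₀.add ((h₂.sub h₁).mul_left _)⟩
  · rintro ⟨h₁, h₂, h₃⟩
    exact ⟨h' ▸ h₃.sub ((h₂.sub h₁).mul_left _), h₁, h₂⟩

end LensSequence

/-- For an integer lens sequence, the gcd of three consecutive terms does
not depend on the position. -/
theorem lens_sequence_gcd_invariant
    (b : ℤ → ℤ) (α β : ℤ)
    (hrec : ∀ n : ℤ, b (n + 1) = α * b n - b (n - 1) + β) :
    ∀ k l : ℤ, Int.gcd (Int.gcd (b k) (b (k + 1)) : ℤ) (b (k + 2))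
      = Int.gcd (Int.gcd (b l) (b (l + 1)) : ℤ) (b (l + 2)) := by
  set g : ℤ → ℕ := fun n => Int.gcd (Int.gcd (b n) (b (n + 1)) : ℤ) (b (n + 2))
  have hg : Function.Periodic g 1 := fun n => Nat.dvd_left_iff_eq.mp fun d => by
    simp only [g, Int.dvd_gcd_iff, Int.dvd_coe_gcd_iff, and_assoc]
    rw [show n + 1 + 1 = n + 2 by ring, show n + 1 + 2 = n + 3 by ring]
    exact (dvd_three_consecutive_iff_add_one hrec d n).symm
  intro k l
  simpa using (hg.int_mul_eq k).trans (hg.int_mul_eq l).symm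
end

section
/- Let b : ℤ → ℚ with b(n) ≠ 0 for all n satisfy the lens recurrence b(n+1) = α·b(n) − b(n−1) + β for all n ∈ ℤ, together with the compatibility condition b(n₀)² + b(n₀+1)² = α·b(n₀)·b(n₀+1) + β·(b(n₀) + b(n₀+1)) at some index n₀. Let f : ℤ → ℚ with f(n) ≠ 0 for all n be any factorization of b, i.e. b(n) = f(n−1)·f(n) for all n ∈ ℤ. Then f satisfies the three-term recurrence f(n+2) + f(n−2) = α·f(n) for all n ∈ ℤ. -/
/-!
The quantity `b n ^ 2 + b (n + 1) ^ 2 - α b n b (n + 1) - β (b n + b (n + 1))` is a first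
integral of the lens recurrence, so compatibility at one index gives it at every index.
Substituting `b n = f (n - 1) f n` into the recurrence at `n` and `n + 1` and into the
compatibility condition at `n`, a suitable combination of the three equations is
`f (n - 1) f n f (n + 1) (f (n + 2) + f (n - 2) - α f n) = 0`.
-/

variable {R : Type*} [CommRing R]

def IsLensSequence (α β : R) (b : ℤ → R) : Prop :=
  ∀ n : ℤ, b (n + 1) = α * b n - b (n - 1) + β

namespace IsLensSequence

variable {α β : R} {b : ℤ → R}

theorem lensDefect_succ (hb : IsLensSequence α β b) (n : ℤ) :
    lensDefect α β b (n + 1) = lensDefect α β b n := by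
  have h := hb (n + 1)
  rw [add_sub_cancel_right] at h
  unfold lensDefect
  linear_combination (b (n + 1 + 1) - b n) * h

theorem lensDefect_eq (hb : IsLensSequence α β b) (m n : ℤ) :
    lensDefect α β b m = lensDefect α β b n := by
  suffices h : ∀ k : ℤ, lensDefect α β b (n + k) = lensDefect α β b n by
    simpa using h (m - n)
  intro k
  induction k using Int.induction_on with
  | zero => simp
  | succ k ih => rw [← add_assoc, hb.lensDefect_succ, ih]
  | pred k ih => rw [← ih, ← hb.lensDefect_succ]; congr 1; ring

theorem lensDefect_eq_zero (hb : IsLensSequence α β b) {n₀ : ℤ}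
    (h₀ : lensDefect α β b n₀ = 0) (n : ℤ) : lensDefect α β b n = 0 :=
  (hb.lensDefect_eq n n₀).trans h₀

end IsLensSequence

theorem add_sub_two_eq_mul_of_lensDefect_eq_zero [IsDomain R] {α β : R} {b f : ℤ → R}
    (hb : IsLensSequence α β b) (hfac : ∀ n : ℤ, b n = f (n - 1) * f n) {n : ℤ}
    (hn : lensDefect α β b n = 0) (hf : f (n - 1) * f n * f (n + 1) ≠ 0) :
    f (n + 2) + f (n - 2) = α * f n := by
  have h₁ := hb n
  have h₂ := hb (n + 1)
  rw [add_sub_cancel_right, add_assoc, one_add_one_eq_two] at h₂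
  have e₀ : b (n - 1) = f (n - 2) * f (n - 1) := by rw [hfac]; ring_nf
  have e₂ : b (n + 1) = f n * f (n + 1) := by rw [hfac, add_sub_cancel_right]
  have e₃ : b (n + 2) = f (n + 1) * f (n + 2) := by rw [hfac]; ring_nf
  unfold lensDefect at hn
  simp only [e₀, hfac n, e₂, e₃] at h₁ h₂ hn
  refine mul_left_cancel₀ hf ?_
  linear_combination (f (n - 1) * f n) * h₂ + (f n * f (n + 1)) * h₁ - hn

theorem underground_three_term_recurrence_general
    (b : ℤ → ℚ) (α β : ℚ)
    (hrec : ∀ n : ℤ, b (n + 1) = α * b n - b (n - 1) + β)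
    (n₀ : ℤ)
    (hcomp : (b n₀) ^ 2 + (b (n₀ + 1)) ^ 2
      = α * b n₀ * b (n₀ + 1) + β * (b n₀ + b (n₀ + 1)))
    (f : ℤ → ℚ) (hf : ∀ n : ℤ, f n ≠ 0)
    (hfac : ∀ n : ℤ, b n = f (n - 1) * f n) :
    ∀ n : ℤ, f (n + 2) + f (n - 2) = α * f n := by
  have hb : IsLensSequence α β b := hrec
  have h₀ : lensDefect α β b n₀ = 0 := by
    unfold lensDefect
    linear_combination hcomp
  intro n
  exact add_sub_two_eq_mul_of_lensDefect_eq_zero hb hfac (hb.lensDefect_eq_zero h₀ n)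
    (mul_ne_zero (mul_ne_zero (hf _) (hf _)) (hf _))

/-- Any nowhere-vanishing factorization `f` of a lens sequence `b`
(i.e. `b n = f (n-1) * f n`) satisfies `f (n+2) + f (n-2) = α * f n`. -/
theorem underground_three_term_recurrence
    (b : ℤ → ℚ) (α β : ℚ) (hb : ∀ n : ℤ, b n ≠ 0)
    (hrec : ∀ n : ℤ, b (n + 1) = α * b n - b (n - 1) + β)
    (n₀ : ℤ)
    (hcomp : (b n₀) ^ 2 + (b (n₀ + 1)) ^ 2
      = α * b n₀ * b (n₀ + 1) + β * (b n₀ + b (n₀ + 1)))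
    (f : ℤ → ℚ) (hf : ∀ n : ℤ, f n ≠ 0)
    (hfac : ∀ n : ℤ, b n = f (n - 1) * f n) :
    ∀ n : ℤ, f (n + 2) + f (n - 2) = α * f n :=
  underground_three_term_recurrence_general b α β hrec n₀ hcomp f hf hfac
end

section
/- Let b : ℤ → ℤ with b(n) ≠ 0 for all n, and α, β ∈ ℤ, satisfy b(n+1) = α·b(n) − b(n−1) + β for all n ∈ ℤ together with the compatibility condition b(n₀)² + b(n₀+1)² = α·b(n₀)·b(n₀+1) + β·(b(n₀) + b(n₀+1)) at some index n₀. Then there exists an integer sequence f : ℤ → ℤ such that b(n) = f(n−1)·f(n) for all n ∈ ℤ. -/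
/-!
The compatibility defect `b n ^ 2 + b (n + 1) ^ 2 - α b n b (n + 1) - β (b n + b (n + 1))` is
conserved by the recurrence, so it vanishes everywhere, which amounts to
`b (n - 1) b (n + 1) = b n (b n - β)` for all `n`.

Start from `f n₀ = gcd (b n₀, b (n₀ + 1))`, `f (n₀ - 1) = b n₀ / f n₀` and continue by
`f (n + 1) = b (n + 1) / f n`. The invariant `f (n - 1) ∣ b (n - 1)`, `f n ∣ b (n + 1)` propagates:
`f (n - 1)` divides `b (n + 1) - β = α b n - b (n - 1)`, and cancelling `b n = f (n - 1) f n` in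
`b n b (n + 2) = b (n + 1) (b (n + 1) - β)` shows that `f (n + 1)` divides `b (n + 2)`.
The backward half is the forward half of the reflected sequence `k ↦ b (2 n₀ - k)`.
-/

namespace LensSequence

section CommRing

variable {R : Type*} [CommRing R] {b : ℤ → R} {α β : R}

def defect (b : ℤ → R) (α β : R) (n : ℤ) : R :=
  b n ^ 2 + b (n + 1) ^ 2 - α * b n * b (n + 1) - β * (b n + b (n + 1))

theorem defect_periodic (hrec : ∀ n, b (n + 1) = α * b n - b (n - 1) + β) :
    Function.Periodic (defect b α β) 1 := by
  intro n
  have h := hrec (n + 1)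
  rw [add_sub_cancel_right] at h
  unfold defect
  linear_combination (b (n + 1 + 1) - b n) * h

theorem mul_pred_succ (hrec : ∀ n, b (n + 1) = α * b n - b (n - 1) + β) {n₀ : ℤ}
    (hcomp : b n₀ ^ 2 + b (n₀ + 1) ^ 2 = α * b n₀ * b (n₀ + 1) + β * (b n₀ + b (n₀ + 1)))
    (n : ℤ) : b (n - 1) * b (n + 1) = b n * (b n - β) := by
  have h := (defect_periodic hrec).sub_int_mul_eq (x := n₀) (n₀ - n)
  rw [Int.cast_id, mul_one, sub_sub_cancel] at h
  unfold defect at h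
  linear_combination b (n + 1) * hrec n - h - hcomp

theorem recurrence_reflect (hrec : ∀ n, b (n + 1) = α * b n - b (n - 1) + β) (m n : ℤ) :
    b (m - (n + 1)) = α * b (m - n) - b (m - (n - 1)) + β := by
  have h := hrec (m - n)
  rw [show m - n + 1 = m - (n - 1) by ring, show m - n - 1 = m - (n + 1) by ring] at h
  linear_combination h

theorem mul_pred_succ_reflect (hmul : ∀ n, b (n - 1) * b (n + 1) = b n * (b n - β)) (m n : ℤ) :
    b (m - (n - 1)) * b (m - (n + 1)) = b (m - n) * (b (m - n) - β) := by
  have h := hmul (m - n)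
  rw [show m - n - 1 = m - (n + 1) by ring, show m - n + 1 = m - (n - 1) by ring] at h
  linear_combination h

end CommRing

section Int

variable {b : ℤ → ℤ} {α β n p q : ℤ}

/-- `(p, q)` are admissible values for `(f (n - 1), f n)`. -/
def IsUndergroundPair (b : ℤ → ℤ) (n p q : ℤ) : Prop :=
  p * q = b n ∧ p ∣ b (n - 1) ∧ q ∣ b (n + 1)

theorem exists_isUndergroundPair (hmul : b (n - 1) * b (n + 1) = b n * (b n - β)) (hb : b n ≠ 0) :
    ∃ p q, IsUndergroundPair b n p q := by
  have hg : gcd (b n) (b (n + 1)) ≠ 0 := fun h => hb ((gcd_eq_zero_iff _ _).1 h).1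
  refine ⟨b n / gcd (b n) (b (n + 1)), gcd (b n) (b (n + 1)),
    Int.ediv_mul_cancel (gcd_dvd_left _ _), ?_, gcd_dvd_right _ _⟩
  -- `b n` divides `b (n + 1) * b (n - 1)` and `b n * b (n - 1)`, hence `gcd * b (n - 1)`.
  have h : b n ∣ gcd (b n) (b (n + 1)) * b (n - 1) :=
    dvd_gcd_mul_iff_dvd_mul.2 ⟨b n - β, by rw [mul_comm, hmul]⟩
  rw [← mul_dvd_mul_iff_right hg, Int.ediv_mul_cancel (gcd_dvd_left _ _), mul_comm (b (n - 1))]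
  exact h

theorem IsUndergroundPair.reflect (h : IsUndergroundPair b n p q) :
    IsUndergroundPair (fun k => b (2 * n - k)) n q p := by
  obtain ⟨hpq, hp, hq⟩ := h
  refine ⟨?_, ?_, ?_⟩ <;> simp only
  · rwa [show 2 * n - n = n by ring, mul_comm]
  · rwa [show 2 * n - (n - 1) = n + 1 by ring]
  · rwa [show 2 * n - (n + 1) = n - 1 by ring]

theorem IsUndergroundPair.succ (hrec : ∀ n, b (n + 1) = α * b n - b (n - 1) + β)
    (hmul : ∀ n, b (n - 1) * b (n + 1) = b n * (b n - β)) (hb : b n ≠ 0)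
    (h : IsUndergroundPair b n p q) : IsUndergroundPair b (n + 1) q (b (n + 1) / q) := by
  obtain ⟨hpq, hp, hq⟩ := h
  have hqr : q * (b (n + 1) / q) = b (n + 1) := Int.mul_ediv_cancel' hq
  obtain ⟨s, hs⟩ : p ∣ b (n + 1) - β := by
    rw [hrec n, add_sub_cancel_right]
    exact dvd_sub (Dvd.dvd.mul_left (hpq ▸ dvd_mul_right p q) α) hp
  refine ⟨hqr, by rw [add_sub_cancel_right, ← hpq]; exact dvd_mul_left q p, s, ?_⟩
  have hmul' := hmul (n + 1)
  rw [add_sub_cancel_right] at hmul'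
  apply mul_left_cancel₀ hb
  linear_combination hmul' - (b (n + 1) - β) * hqr + q * (b (n + 1) / q) * hs
    + b (n + 1) / q * s * hpq

def forwardUnderground (b : ℤ → ℤ) (n p q : ℤ) : ℕ → ℤ
  | 0 => p
  | 1 => q
  | k + 2 => b (n + k + 1) / forwardUnderground b n p q (k + 1)

theorem isUndergroundPair_forwardUnderground (hrec : ∀ n, b (n + 1) = α * b n - b (n - 1) + β)
    (hmul : ∀ n, b (n - 1) * b (n + 1) = b n * (b n - β)) (hb : ∀ n, b n ≠ 0)
    (h : IsUndergroundPair b n p q) (k : ℕ) :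
    IsUndergroundPair b (n + k) (forwardUnderground b n p q k)
      (forwardUnderground b n p q (k + 1)) := by
  induction k with
  | zero => simpa [forwardUnderground] using h
  | succ k ih =>
    rw [Nat.cast_succ, ← add_assoc]
    exact ih.succ hrec hmul (hb _)

theorem exists_factorization_ge (hrec : ∀ n, b (n + 1) = α * b n - b (n - 1) + β)
    (hmul : ∀ n, b (n - 1) * b (n + 1) = b n * (b n - β)) (hb : ∀ n, b n ≠ 0)
    (h : IsUndergroundPair b n p q) :
    ∃ f : ℤ → ℤ, f (n - 1) = p ∧ f n = q ∧ ∀ k, n ≤ k → b k = f (k - 1) * f k := by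
  refine ⟨fun j => forwardUnderground b n p q (j - n + 1).toNat, by simp [forwardUnderground],
    by simp [forwardUnderground], fun k hk => ?_⟩
  obtain ⟨i, rfl⟩ : ∃ i : ℕ, k = n + i := ⟨(k - n).toNat, by omega⟩
  dsimp only
  rw [show (n + i - 1 - n + 1).toNat = i by omega, show (n + i - n + 1).toNat = i + 1 by omega]
  exact (isUndergroundPair_forwardUnderground hrec hmul hb h i).1.symm

theorem exists_factorization (hrec : ∀ n, b (n + 1) = α * b n - b (n - 1) + β)
    (hmul : ∀ n, b (n - 1) * b (n + 1) = b n * (b n - β)) (hb : ∀ n, b n ≠ 0)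
    (h : IsUndergroundPair b n p q) : ∃ f : ℤ → ℤ, ∀ k, b k = f (k - 1) * f k := by
  obtain ⟨f₁, -, hq₁, hf₁⟩ := exists_factorization_ge hrec hmul hb h
  obtain ⟨f₂, -, hp₂, hf₂⟩ := exists_factorization_ge (recurrence_reflect hrec (2 * n))
    (mul_pred_succ_reflect hmul (2 * n)) (fun k => hb _) h.reflect
  refine ⟨fun k => if n ≤ k then f₁ k else f₂ (2 * n - 1 - k), fun k => ?_⟩
  rcases lt_trichotomy k n with hk | rfl | hk
  · have h₂ := hf₂ (2 * n - k) (by omega)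
    simp only [sub_sub_cancel] at h₂
    simp only [if_neg (show ¬n ≤ k - 1 by omega), if_neg (show ¬n ≤ k by omega)]
    rw [h₂, show 2 * n - k - 1 = 2 * n - 1 - k by ring, show 2 * n - 1 - (k - 1) = 2 * n - k by ring,
      mul_comm]
  · simp only [if_neg (show ¬k ≤ k - 1 by omega), if_pos le_rfl, hq₁,
      show 2 * k - 1 - (k - 1) = k by ring, hp₂]
    exact h.1.symm
  · simp only [if_pos (show n ≤ k - 1 by omega), if_pos hk.le]
    exact hf₁ k hk.le

end Int

end LensSequence

/-- Factorization theorem, existence: any integer lens sequence with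
nowhere-vanishing terms admits an integer factorization `b n = f (n-1) * f n`. -/
theorem lens_sequence_integer_factorization
    (b : ℤ → ℤ) (α β : ℤ) (hb : ∀ n : ℤ, b n ≠ 0)
    (hrec : ∀ n : ℤ, b (n + 1) = α * b n - b (n - 1) + β)
    (n₀ : ℤ)
    (hcomp : (b n₀) ^ 2 + (b (n₀ + 1)) ^ 2
      = α * b n₀ * b (n₀ + 1) + β * (b n₀ + b (n₀ + 1))) :
    ∃ f : ℤ → ℤ, ∀ n : ℤ, b n = f (n - 1) * f n := by
  have hmul := LensSequence.mul_pred_succ hrec hcomp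
  obtain ⟨p, q, hpq⟩ := LensSequence.exists_isUndergroundPair (hmul n₀) (hb n₀)
  exact LensSequence.exists_factorization hrec hmul hb hpq
end

section
/- Let b : ℤ → ℤ with b(n) ≠ 0 for all n, and α, β ∈ ℤ, satisfy b(n+1) = α·b(n) − b(n−1) + β for all n ∈ ℤ together with the compatibility condition at some index, and assume b is primitive, i.e. gcd(b(n), b(n+1), b(n+2)) = 1 for every n. Then: (1) any integer factorization f : ℤ → ℤ of b (meaning b(n) = f(n−1)·f(n) for all n) satisfies |f(n)| = gcd(b(n), b(n+1)) for all n ∈ ℤ; and (2) if f, g : ℤ → ℤ are two integer factorizations of b, then either g(n) = f(n) for all n or g(n) = −f(n) for all n. -/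
/-!
Consecutive terms `b n = f (n-1) f n` and `b (n+1) = f n f (n+1)` share the factor `f n`, and
primitivity forces `f (n-1)` and `f (n+1)` to be coprime, so `gcd (b n) (b (n+1)) = |f n|`.
Hence two factorizations agree up to sign at `0`, and since `b` never vanishes the relation
`f (n-1) f n = g (n-1) g n` propagates that sign to every index.
-/

def IsFactorization {M : Type*} [Mul M] (b f : ℤ → M) : Prop :=
  ∀ n, b n = f (n - 1) * f n

theorem Int.gcd_eq_one_of_gcd_gcd_mul_eq_one {x y z w : ℤ}
    (h : Int.gcd (Int.gcd (x * y) (y * z) : ℤ) (z * w) = 1) : Int.gcd x z = 1 := by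
  have hdvd : (Int.gcd x z : ℤ) ∣ (Int.gcd (Int.gcd (x * y) (y * z) : ℤ) (z * w) : ℤ) :=
    Int.dvd_coe_gcd
      (Int.dvd_coe_gcd ((Int.gcd_dvd_left x z).mul_right y) ((Int.gcd_dvd_right x z).mul_left y))
      ((Int.gcd_dvd_right x z).mul_right w)
  rw [h] at hdvd
  exact Nat.dvd_one.mp (Int.natCast_dvd_natCast.mp hdvd)

theorem Int.gcd_mul_mul_of_gcd_eq_one {x y z : ℤ} (h : Int.gcd x z = 1) :
    (Int.gcd (x * y) (y * z) : ℤ) = |y| := by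
  rw [mul_comm y z, Int.gcd_mul_right, h, one_mul, Int.abs_eq_natAbs]

namespace IsFactorization

theorem succ {M : Type*} [Mul M] {b f : ℤ → M} (hf : IsFactorization b f) (n : ℤ) :
    b (n + 1) = f n * f (n + 1) := by
  simpa using hf (n + 1)

theorem ne_zero {M : Type*} [MulZeroClass M] {b f : ℤ → M} (hf : IsFactorization b f)
    (hb : ∀ n, b n ≠ 0) (n : ℤ) : f n ≠ 0 := by
  intro hn
  exact hb (n + 1) (by rw [hf.succ, hn, zero_mul])

theorem eq_of_apply_zero_eq {M : Type*} [MonoidWithZero M] [IsCancelMulZero M] {b f g : ℤ → M}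
    (hf : IsFactorization b f) (hg : IsFactorization b g)
    (hb : ∀ n, b n ≠ 0) (h0 : g 0 = f 0) : g = f := by
  funext n
  induction n using Int.induction_on with
  | zero => exact h0
  | succ k ih =>
    have h := (hg.succ k).symm.trans (hf.succ k)
    rw [ih] at h
    exact mul_left_cancel₀ (hf.ne_zero hb k) h
  | pred k ih =>
    have h := (hg (-k)).symm.trans (hf (-k))
    rw [ih] at h
    exact mul_right_cancel₀ (hf.ne_zero hb (-k)) h

theorem neg {R : Type*} [Mul R] [HasDistribNeg R] {b f : ℤ → R} (hf : IsFactorization b f) :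
    IsFactorization b (-f) := fun n => by
  simpa only [Pi.neg_apply, neg_mul_neg] using hf n

theorem abs_eq_gcd {b f : ℤ → ℤ} (hf : IsFactorization b f)
    (hprim : ∀ n, Int.gcd (Int.gcd (b n) (b (n + 1)) : ℤ) (b (n + 2)) = 1) (n : ℤ) :
    |f n| = (Int.gcd (b n) (b (n + 1)) : ℤ) := by
  have hb2 : b (n + 2) = f (n + 1) * f (n + 2) := by
    simpa only [add_assoc, one_add_one_eq_two] using hf.succ (n + 1)
  have hprim_n := hprim n
  rw [hf n, hf.succ n, hb2] at hprim_n
  rw [hf n, hf.succ n, Int.gcd_mul_mul_of_gcd_eq_one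
    (Int.gcd_eq_one_of_gcd_gcd_mul_eq_one hprim_n)]

theorem eq_or_eq_neg {b f g : ℤ → ℤ} (hf : IsFactorization b f) (hg : IsFactorization b g)
    (hb : ∀ n, b n ≠ 0)
    (hprim : ∀ n, Int.gcd (Int.gcd (b n) (b (n + 1)) : ℤ) (b (n + 2)) = 1) :
    g = f ∨ g = -f := by
  have habs : |g 0| = |f 0| := by rw [hf.abs_eq_gcd hprim, hg.abs_eq_gcd hprim]
  rcases abs_eq_abs.mp habs with h0 | h0
  · exact Or.inl (hf.eq_of_apply_zero_eq hg hb h0)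
  · exact Or.inr (hf.neg.eq_of_apply_zero_eq hg hb h0)

end IsFactorization

theorem lens_sequence_factorization_unique_general
    (b : ℤ → ℤ) (hb : ∀ n : ℤ, b n ≠ 0)
    (hprim : ∀ n : ℤ, Int.gcd (Int.gcd (b n) (b (n + 1)) : ℤ) (b (n + 2)) = 1) :
    (∀ f : ℤ → ℤ, (∀ n : ℤ, b n = f (n - 1) * f n) →
      ∀ n : ℤ, |f n| = (Int.gcd (b n) (b (n + 1)) : ℤ)) ∧
    (∀ f g : ℤ → ℤ, (∀ n : ℤ, b n = f (n - 1) * f n) →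
      (∀ n : ℤ, b n = g (n - 1) * g n) →
      (∀ n : ℤ, g n = f n) ∨ (∀ n : ℤ, g n = -f n)) := by
  refine ⟨fun f hf => IsFactorization.abs_eq_gcd hf hprim, fun f g hf hg => ?_⟩
  rcases IsFactorization.eq_or_eq_neg hf hg hb hprim with rfl | rfl
  · exact Or.inl fun _ => rfl
  · exact Or.inr fun _ => rfl

/-- Factorization theorem, uniqueness for primitive sequences:
for a primitive integer lens sequence, any integer factorization `f` satisfies
`|f n| = gcd (b n) (b (n+1))`, and the factorization is unique up to a global sign. -/
theorem lens_sequence_factorization_unique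
    (b : ℤ → ℤ) (α β : ℤ) (hb : ∀ n : ℤ, b n ≠ 0)
    (hrec : ∀ n : ℤ, b (n + 1) = α * b n - b (n - 1) + β)
    (n₀ : ℤ)
    (hcomp : (b n₀) ^ 2 + (b (n₀ + 1)) ^ 2
      = α * b n₀ * b (n₀ + 1) + β * (b n₀ + b (n₀ + 1)))
    (hprim : ∀ n : ℤ, Int.gcd (Int.gcd (b n) (b (n + 1)) : ℤ) (b (n + 2)) = 1) :
    (∀ f : ℤ → ℤ, (∀ n : ℤ, b n = f (n - 1) * f n) →
      ∀ n : ℤ, |f n| = (Int.gcd (b n) (b (n + 1)) : ℤ)) ∧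
    (∀ f g : ℤ → ℤ, (∀ n : ℤ, b n = f (n - 1) * f n) →
      (∀ n : ℤ, b n = g (n - 1) * g n) →
      (∀ n : ℤ, g n = f n) ∨ (∀ n : ℤ, g n = -f n)) :=
  lens_sequence_factorization_unique_general b hb hprim
end

section
/- Let k, s ∈ ℤ and let f : ℤ → ℤ be an alternating sequence for (k, s): for every n ∈ ℤ, f(n) = k·f(n−1) − f(n−2) if n is even, and f(n) = s·f(n−1) − f(n−2) if n is odd. Define b(n) = f(n−1)·f(n). Then, with α = k·s − 2 and β = k·f(1)² + s·f(0)² − k·s·f(0)·f(1), the sequence b satisfies, for all n ∈ ℤ, both the lens recurrence b(n+1) = α·b(n) − b(n−1) + β and the compatibility condition b(n)² + b(n+1)² = α·b(n)·b(n+1) + β·(b(n) + b(n+1)). -/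
/-!
Both recurrences are the single recurrence `f n = c n * f (n - 1) - f (n - 2)` whose coefficient
`c n` is `k` at even and `s` at odd indices. The quadratic form
`c (n + 1) * f n ^ 2 + c n * f (n - 1) ^ 2 - k * s * f (n - 1) * f n` is then independent of `n`
(a Vieta jump of the recurrence leaves it unchanged), and its value at `n = 1` is `β`.
With `x = f (n - 1)` and `y = f n`, the neighbouring products are `b (n + 1) = y * (c (n + 1) * y - x)`
and `b (n - 1) = x * (c n * x - y)`, and both the lens recurrence and the compatibility condition
are polynomial identities modulo the value `β` of the invariant.
-/

namespace AlternatingSequence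

variable {R : Type*}

def coeff (k s : R) (n : ℤ) : R := if Even n then k else s

theorem coeff_add_two (k s : R) (n : ℤ) : coeff k s (n + 2) = coeff k s n := by
  simp [coeff]

variable [CommRing R]

theorem coeff_mul_coeff_add_one (k s : R) (n : ℤ) :
    coeff k s n * coeff k s (n + 1) = k * s := by
  by_cases h : Even n <;> simp [coeff, h, mul_comm]

def IsAlternating (k s : R) (f : ℤ → R) : Prop :=
  ∀ n, f n = coeff k s n * f (n - 1) - f (n - 2)

theorem isAlternating_of_even_of_odd {k s : R} {f : ℤ → R}
    (hfe : ∀ n : ℤ, Even n → f n = k * f (n - 1) - f (n - 2))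
    (hfo : ∀ n : ℤ, Odd n → f n = s * f (n - 1) - f (n - 2)) :
    IsAlternating k s f := by
  intro n
  rcases Int.even_or_odd n with h | h
  · simp [coeff, h, hfe n h]
  · simp [coeff, Int.not_even_iff_odd.2 h, hfo n h]

def invariant (k s : R) (f : ℤ → R) (n : ℤ) : R :=
  coeff k s (n + 1) * f n ^ 2 + coeff k s n * f (n - 1) ^ 2 - k * s * f (n - 1) * f n

theorem invariant_one (k s : R) (f : ℤ → R) :
    invariant k s f 1 = k * f 1 ^ 2 + s * f 0 ^ 2 - k * s * f 0 * f 1 := by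
  simp [invariant, coeff]

namespace IsAlternating

variable {k s : R} {f : ℤ → R}

theorem add_one (hf : IsAlternating k s f) (n : ℤ) :
    f (n + 1) = coeff k s (n + 1) * f n - f (n - 1) := by
  have h := hf (n + 1)
  rwa [add_sub_cancel_right, show n + 1 - 2 = n - 1 by ring] at h

theorem sub_two (hf : IsAlternating k s f) (n : ℤ) :
    f (n - 2) = coeff k s n * f (n - 1) - f n := by
  linear_combination hf n

theorem invariant_add_one (hf : IsAlternating k s f) (n : ℤ) :
    invariant k s f (n + 1) = invariant k s f n := by
  have hc := coeff_mul_coeff_add_one k s n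
  simp only [invariant, add_sub_cancel_right, add_assoc, one_add_one_eq_two, coeff_add_two,
    hf.add_one n]
  linear_combination (f n * (coeff k s (n + 1) * f n - f (n - 1)) - f (n - 1) * f n) * hc

theorem invariant_eq_invariant_one (hf : IsAlternating k s f) (n : ℤ) :
    invariant k s f n = invariant k s f 1 := by
  induction n using Int.inductionOn' (b := 1) with
  | zero => rfl
  | succ m _ ih => rw [hf.invariant_add_one, ih]
  | pred m _ ih => rw [← ih, ← hf.invariant_add_one, sub_add_cancel]

theorem lens_recurrence (hf : IsAlternating k s f) (n : ℤ) :
    f n * f (n + 1) =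
      (k * s - 2) * (f (n - 1) * f n) - f (n - 2) * f (n - 1) + invariant k s f 1 := by
  rw [← hf.invariant_eq_invariant_one n, hf.add_one, hf.sub_two, invariant,
    ← coeff_mul_coeff_add_one k s n]
  ring

theorem lens_compatibility (hf : IsAlternating k s f) (n : ℤ) :
    (f (n - 1) * f n) ^ 2 + (f n * f (n + 1)) ^ 2 =
      (k * s - 2) * (f (n - 1) * f n) * (f n * f (n + 1)) +
        invariant k s f 1 * (f (n - 1) * f n + f n * f (n + 1)) := by
  rw [← hf.invariant_eq_invariant_one n, hf.add_one, invariant, ← coeff_mul_coeff_add_one k s n]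
  ring

end IsAlternating

end AlternatingSequence

open AlternatingSequence in
/-- Underground Sequence Structure, part (i): if `f` is an alternating
sequence for `(k, s)` and `b n = f (n-1) * f n`, then `b` satisfies the lens recurrence
with `α = k·s - 2`, `β = k·f(1)² + s·f(0)² - k·s·f(0)·f(1)`, together with the
compatibility condition at every index. -/
theorem alternating_sequence_gives_lens_sequence
    (k s : ℤ) (f : ℤ → ℤ)
    (hfe : ∀ n : ℤ, Even n → f n = k * f (n - 1) - f (n - 2))
    (hfo : ∀ n : ℤ, Odd n → f n = s * f (n - 1) - f (n - 2))
    (b : ℤ → ℤ) (hbf : ∀ n : ℤ, b n = f (n - 1) * f n)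
    (α β : ℤ) (hα : α = k * s - 2)
    (hβ : β = k * (f 1) ^ 2 + s * (f 0) ^ 2 - k * s * (f 0) * (f 1)) :
    ∀ n : ℤ, b (n + 1) = α * b n - b (n - 1) + β ∧
      (b n) ^ 2 + (b (n + 1)) ^ 2 = α * b n * b (n + 1) + β * (b n + b (n + 1)) := by
  intro n
  have hf := isAlternating_of_even_of_odd hfe hfo
  rw [← invariant_one] at hβ
  simp only [hbf, add_sub_cancel_right, sub_sub, one_add_one_eq_two, hα, hβ]
  exact ⟨hf.lens_recurrence n, hf.lens_compatibility n⟩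
end

section
/- Let a, b, c be positive integers. The bilateral sequence x : ℤ → ℚ determined by x(0) = a, x(1) = b, x(2) = c and the lens recurrence x(n+1) = α·x(n) − x(n−1) + β with α = (a·b + b·c + c·a)/b² − 1 and β = (b² − a·c)/b takes a value in ℤ at every index n ∈ ℤ if and only if the following three conditions hold, where d = gcd(a, b, c): (i) gcd(a,b)·gcd(b,c) = b·d; (ii) gcd(a,b)² divides (a + b)·d; (iii) gcd(b,c)² divides (b + c)·d. -/
/-!
Since `α + 2 = (a + b)(b + c)/b²`, every extension is integral iff `α ∈ ℤ`, i.e. iff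
`b² ∣ (a + b)(b + c)`. If `α ∈ ℤ`, then so is `β = a + c - α b`, and integrality propagates in
both directions because the recurrence can be run backwards. Conversely, if `α = p/q` in lowest
terms with `q > 1`, the differences `D n = x (n + 1) - x n` of an integral extension satisfy
`q (D (n + 1) + D (n - 1)) = p D n`, so every power of `q` divides every `D n`: the sequence is
constant, `a = b = c`, and `b² ∣ (a + b)(b + c)` holds anyway.

The divisibility `b² ∣ (a + b)(b + c)` yields the gcd conditions through `b · gcd(a, b, c) ∣ a c`;
conversely, (i) makes `gcd(a, b)² gcd(b, c)² = b² d²`, which by (ii) and (iii) divides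
`(a + b)(b + c) d²`.
-/

def lensStep {R : Type*} [Ring R] (α β : R) : Equiv.Perm (R × R) where
  toFun s := (s.2, α * s.2 - s.1 + β)
  invFun s := (α * s.1 - s.2 + β, s.1)
  left_inv s := by ext <;> simp; abel
  right_inv s := by ext <;> simp; abel

section LensRecurrence

variable {R : Type*} [Ring R] (α β : R)

theorem lensStep_zpow_add_one (n : ℤ) (s : R × R) :
    (lensStep α β ^ (n + 1)) s = lensStep α β ((lensStep α β ^ n) s) := by
  rw [add_comm, zpow_add, zpow_one, Equiv.Perm.mul_apply]

theorem exists_lens_seq (A B : R) :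
    ∃ x : ℤ → R, x 0 = A ∧ x 1 = B ∧ ∀ n, x (n + 1) = α * x n - x (n - 1) + β := by
  set x : ℤ → R := fun n => ((lensStep α β ^ n) (A, B)).1
  have hsucc : ∀ n, x (n + 1) = ((lensStep α β ^ n) (A, B)).2 := fun n => by
    simp only [x, lensStep_zpow_add_one]
    rfl
  refine ⟨x, rfl, by simpa using hsucc 0, fun n => ?_⟩
  obtain ⟨m, rfl⟩ : ∃ m, n = m + 1 := ⟨n - 1, by ring⟩
  rw [hsucc, hsucc, lensStep_zpow_add_one, add_sub_cancel_right]
  rfl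

theorem lens_mem_subring (S : Subring R) {x : ℤ → R} (hα : α ∈ S) (hβ : β ∈ S)
    (h0 : x 0 ∈ S) (h1 : x 1 ∈ S) (hrec : ∀ n, x (n + 1) = α * x n - x (n - 1) + β) (n : ℤ) :
    x n ∈ S := by
  suffices ∀ n, x n ∈ S ∧ x (n + 1) ∈ S from (this n).1
  intro n
  induction n using Int.induction_on with
  | zero => exact ⟨h0, by simpa using h1⟩
  | succ n ih =>
    refine ⟨ih.2, ?_⟩
    rw [hrec, add_sub_cancel_right]
    exact add_mem (sub_mem (mul_mem hα ih.2) ih.1) hβ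
  | pred n ih =>
    have hback : x (-n - 1) = α * x (-n) - x (-n + 1) + β := by rw [hrec]; abel
    rw [sub_add_cancel]
    exact ⟨hback ▸ add_mem (sub_mem (mul_mem hα ih.1) ih.2) hβ, ih.1⟩

end LensRecurrence

namespace Int

theorem pow_dvd_of_mul_add_eq_mul {p q : ℤ} {y : ℤ → ℤ} (hqp : IsCoprime q p)
    (hy : ∀ n, q * (y (n + 1) + y (n - 1)) = p * y n) (k : ℕ) (n : ℤ) : q ^ k ∣ y n := by
  induction k generalizing n with
  | zero => rw [pow_zero]; exact one_dvd _
  | succ k ih =>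
    have : q ^ (k + 1) ∣ p * y n := by
      rw [← hy, pow_succ']
      exact mul_dvd_mul_left q ((ih _).add (ih _))
    exact hqp.pow_left.dvd_of_dvd_mul_left this

theorem eq_zero_of_mul_add_eq_mul {p q : ℤ} {y : ℤ → ℤ} (hq : q.natAbs ≠ 1)
    (hqp : IsCoprime q p) (hy : ∀ n, q * (y (n + 1) + y (n - 1)) = p * y n) (n : ℤ) :
    y n = 0 := by
  by_contra hn
  obtain ⟨k, hk⟩ := finiteMultiplicity_iff.mpr ⟨hq, hn⟩
  exact hk (pow_dvd_of_mul_add_eq_mul hqp hy _ n)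

theorem dvd_mul_gcd_of_dvd_mul_of_dvd_mul {x y b c : ℤ} (hxb : x ∣ y * b) (hxc : x ∣ y * c) :
    x ∣ y * b.gcd c := by
  rw [gcd_eq_gcd_ab, mul_add, ← mul_assoc, ← mul_assoc]
  exact (hxb.mul_right _).add (hxc.mul_right _)

theorem mul_dvd_mul_of_sq_dvd_add_mul_add {a b c e : ℤ} (hb : b ≠ 0)
    (h : b ^ 2 ∣ (a + b) * (b + c)) (hea : e ∣ a) (heb : e ∣ b) (hec : e ∣ c) :
    b * e ∣ a * c := by
  have hexp : (a + b) * (b + c) = b * (a + b + c) + a * c := by ring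
  obtain ⟨t, ht⟩ : b ∣ a * c :=
    (dvd_add_right (dvd_mul_right b _)).mp (hexp ▸ (dvd_pow_self b two_ne_zero).trans h)
  have hbt : b ∣ a + b + c + t := by
    rw [← mul_dvd_mul_iff_left hb, ← sq]
    exact h.trans (dvd_of_eq (by rw [hexp, ht]; ring))
  rw [ht]
  exact mul_dvd_mul_left b ((dvd_add_right ((hea.add heb).add hec)).mp (heb.trans hbt))

theorem gcd_mul_gcd_eq_of_sq_dvd_add_mul_add {a b c : ℤ} (hb : 0 < b)
    (h : b ^ 2 ∣ (a + b) * (b + c)) :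
    (a.gcd b : ℤ) * b.gcd c = b * (a.gcd b : ℤ).gcd c := by
  set p : ℤ := (a.gcd b : ℤ)
  set q : ℤ := (b.gcd c : ℤ)
  set d : ℤ := (p.gcd c : ℤ)
  have hpa : p ∣ a := gcd_dvd_left a b
  have hpb : p ∣ b := gcd_dvd_right a b
  have hqb : q ∣ b := gcd_dvd_left b c
  have hqc : q ∣ c := gcd_dvd_right b c
  have hdp : d ∣ p := gcd_dvd_left p c
  have hdc : d ∣ c := gcd_dvd_right p c
  have hac : b * d ∣ c * a := mul_comm a c ▸
    mul_dvd_mul_of_sq_dvd_add_mul_add hb.ne' h (hdp.trans hpa) (hdp.trans hpb) hdc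
  refine dvd_antisymm (by positivity) (by positivity) ?_ ?_
  · refine dvd_mul_gcd_of_dvd_mul_of_dvd_mul ?_ (mul_dvd_mul hpb hqc)
    rw [mul_comm b]
    exact mul_dvd_mul_left p hqb
  · refine dvd_mul_gcd_of_dvd_mul_of_dvd_mul (mul_comm b d ▸ mul_dvd_mul hdp dvd_rfl) ?_
    rw [mul_comm p c]
    refine dvd_mul_gcd_of_dvd_mul_of_dvd_mul hac ?_
    rw [mul_comm c]
    exact mul_dvd_mul_left b hdc

theorem gcd_sq_dvd_of_sq_dvd_add_mul_add {a b c d : ℤ} (hb : b ≠ 0)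
    (h : b ^ 2 ∣ (a + b) * (b + c)) (hd : (a.gcd b : ℤ) * b.gcd c = b * d) :
    (a.gcd b : ℤ) ^ 2 ∣ (a + b) * d := by
  set p : ℤ := (a.gcd b : ℤ)
  have hpb : p ∣ b := gcd_dvd_right a b
  have hab : p * b ∣ (a + b) * b := mul_dvd_mul_right ((gcd_dvd_left a b).add hpb) b
  have hac : p * b ∣ (a + b) * c := by
    have : p * b ∣ (a + b) * b + (a + b) * c := by
      rw [← mul_add]
      exact (mul_dvd_mul_right hpb b).trans (sq b ▸ h)
    exact (dvd_add_right hab).mp this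
  rw [← mul_dvd_mul_iff_left hb]
  calc b * p ^ 2 = p * (p * b) := by ring
    _ ∣ p * ((a + b) * b.gcd c) := mul_dvd_mul_left p (dvd_mul_gcd_of_dvd_mul_of_dvd_mul hab hac)
    _ = b * ((a + b) * d) := by linear_combination (a + b) * hd

theorem sq_dvd_add_mul_add_iff {a b c : ℤ} (hb : 0 < b) :
    b ^ 2 ∣ (a + b) * (b + c) ↔
      (a.gcd b : ℤ) * b.gcd c = b * (a.gcd b : ℤ).gcd c ∧
        (a.gcd b : ℤ) ^ 2 ∣ (a + b) * (a.gcd b : ℤ).gcd c ∧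
        (b.gcd c : ℤ) ^ 2 ∣ (b + c) * (a.gcd b : ℤ).gcd c := by
  set d : ℤ := ((a.gcd b : ℤ).gcd c : ℤ)
  constructor
  · intro h
    have hpq := gcd_mul_gcd_eq_of_sq_dvd_add_mul_add hb h
    refine ⟨hpq, gcd_sq_dvd_of_sq_dvd_add_mul_add hb.ne' h hpq, ?_⟩
    rw [gcd_comm, add_comm]
    refine gcd_sq_dvd_of_sq_dvd_add_mul_add (c := a) hb.ne' (by convert h using 1; ring) ?_
    rw [mul_comm, gcd_comm b a, gcd_comm c b]
    exact hpq
  · rintro ⟨hpq, hp, hq⟩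
    have hd : d ≠ 0 := by
      simpa [d, gcd_eq_zero_iff] using fun _ hb0 _ => hb.ne' hb0
    rw [← mul_dvd_mul_iff_left (pow_ne_zero 2 hd)]
    calc d ^ 2 * b ^ 2 = (a.gcd b : ℤ) ^ 2 * (b.gcd c : ℤ) ^ 2 := by
          linear_combination (-((a.gcd b : ℤ) * b.gcd c + b * d)) * hpq
      _ ∣ ((a + b) * d) * ((b + c) * d) := mul_dvd_mul hp hq
      _ = d ^ 2 * ((a + b) * (b + c)) := by ring

end Int

theorem lens_alpha_isInt_or_forall_eq {α β : ℚ} {x : ℤ → ℚ}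
    (hrec : ∀ n, x (n + 1) = α * x n - x (n - 1) + β) (hint : ∀ n, ∃ m : ℤ, x n = m) :
    (∃ A : ℤ, α = A) ∨ ∀ n, x (n + 1) = x n := by
  rcases eq_or_ne α.den 1 with hden | hden
  · exact .inl ⟨α.num, (Rat.coe_int_num_of_den_eq_one hden).symm⟩
  right
  choose X hX using hint
  have hD : ∀ n, (α.den : ℤ) * ((X (n + 1 + 1) - X (n + 1)) + (X (n - 1 + 1) - X (n - 1)))
      = α.num * (X (n + 1) - X n) := fun n => by
    have h := hrec (n + 1)
    rw [add_sub_cancel_right] at h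
    have : (α.den : ℚ) * ((x (n + 1 + 1) - x (n + 1)) + (x (n - 1 + 1) - x (n - 1)))
        = α.num * (x (n + 1) - x n) := by
      rw [← Rat.mul_den_eq_num, sub_add_cancel]
      linear_combination (α.den : ℚ) * (h - hrec n)
    simp only [hX] at this
    exact_mod_cast this
  intro n
  have := Int.eq_zero_of_mul_add_eq_mul (y := fun n => X (n + 1) - X n)
    (by simpa using hden) α.isCoprime_num_den.symm hD n
  rw [hX, hX, sub_eq_zero.mp this]

theorem lens_alpha_isInt_iff {a b c : ℤ} (hb : b ≠ 0) :
    (∃ A : ℤ, ((a : ℚ) * b + b * c + c * a) / (b : ℚ) ^ 2 - 1 = A) ↔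
      b ^ 2 ∣ (a + b) * (b + c) := by
  have hb2 : (b : ℚ) ^ 2 ≠ 0 := by positivity
  simp only [div_sub_one hb2, div_eq_iff hb2]
  constructor
  · rintro ⟨A, hA⟩
    refine ⟨A + 2, ?_⟩
    exact_mod_cast (by linear_combination hA : ((a + b) * (b + c) : ℚ) = b ^ 2 * (A + 2))
  · rintro ⟨k, hk⟩
    have hk' : ((a + b) * (b + c) : ℚ) = b ^ 2 * k := by exact_mod_cast hk
    exact ⟨k - 2, by push_cast; linear_combination hk'⟩

theorem lens_sequence_integrality_criterion_two_general
    (a b c : ℤ) (hb : 0 < b) :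
    (∀ x : ℤ → ℚ, x 0 = (a : ℚ) → x 1 = (b : ℚ) → x 2 = (c : ℚ) →
      (∀ n : ℤ, x (n + 1) = (((a : ℚ) * b + b * c + c * a) / (b : ℚ) ^ 2 - 1) * x n
        - x (n - 1) + ((b : ℚ) ^ 2 - (a : ℚ) * c) / (b : ℚ)) →
      ∀ n : ℤ, ∃ m : ℤ, x n = (m : ℚ)) ↔
    ((Int.gcd a b : ℤ) * (Int.gcd b c : ℤ)
        = b * (Int.gcd (Int.gcd a b : ℤ) c : ℤ) ∧
      (Int.gcd a b : ℤ) ^ 2 ∣ (a + b) * (Int.gcd (Int.gcd a b : ℤ) c : ℤ) ∧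
      (Int.gcd b c : ℤ) ^ 2 ∣ (b + c) * (Int.gcd (Int.gcd a b : ℤ) c : ℤ)) := by
  rw [← Int.sq_dvd_add_mul_add_iff hb, ← lens_alpha_isInt_iff hb.ne']
  set α : ℚ := ((a : ℚ) * b + b * c + c * a) / (b : ℚ) ^ 2 - 1 with hα
  set β : ℚ := ((b : ℚ) ^ 2 - (a : ℚ) * c) / (b : ℚ) with hβ
  constructor
  · intro H
    obtain ⟨x, hx0, hx1, hrec⟩ := exists_lens_seq α β (a : ℚ) b
    have hx2 : x 2 = c := by
      rw [show (2 : ℤ) = 1 + 1 by norm_num, hrec, hx1, sub_self, hx0, hα, hβ]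
      field_simp
      ring
    rcases lens_alpha_isInt_or_forall_eq hrec (H x hx0 hx1 hx2 hrec) with hαInt | hconst
    · exact hαInt
    · have hab : a = b := by exact_mod_cast hx0 ▸ hx1 ▸ (hconst 0).symm
      have hbc : b = c := by exact_mod_cast hx1 ▸ hx2 ▸ (hconst 1).symm
      subst hab hbc
      exact ⟨2, by rw [hα]; field_simp; norm_num⟩
  · rintro ⟨A, hA⟩ x hx0 hx1 hx2 hrec n
    have hβA : β = ((c + a - A * b : ℤ) : ℚ) := by
      have h := hrec 1
      rw [show (1 : ℤ) + 1 = 2 by norm_num, sub_self, hx0, hx1, hx2, hA] at h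
      push_cast
      linarith
    obtain ⟨m, hm⟩ := lens_mem_subring α β (Int.castRingHom ℚ).range ⟨A, hA.symm⟩
      ⟨_, hβA.symm⟩ ⟨a, hx0.symm⟩ ⟨b, hx1.symm⟩ hrec n
    exact ⟨m, hm.symm⟩

/-- Integrality Criterion 2: for positive integers `a, b, c`, the lens
sequence extended from the seed `(a,b,c)` is integer at every index iff, with
`d = gcd(a,b,c)`: (i) `gcd(a,b)·gcd(b,c) = b·d`, (ii) `gcd(a,b)² ∣ (a+b)·d`, and
(iii) `gcd(b,c)² ∣ (b+c)·d`. -/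
theorem lens_sequence_integrality_criterion_two
    (a b c : ℤ) (ha : 0 < a) (hb : 0 < b) (hc : 0 < c) :
    (∀ x : ℤ → ℚ, x 0 = (a : ℚ) → x 1 = (b : ℚ) → x 2 = (c : ℚ) →
      (∀ n : ℤ, x (n + 1) = (((a : ℚ) * b + b * c + c * a) / (b : ℚ) ^ 2 - 1) * x n
        - x (n - 1) + ((b : ℚ) ^ 2 - (a : ℚ) * c) / (b : ℚ)) →
      ∀ n : ℤ, ∃ m : ℤ, x n = (m : ℚ)) ↔
    ((Int.gcd a b : ℤ) * (Int.gcd b c : ℤ)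
        = b * (Int.gcd (Int.gcd a b : ℤ) c : ℤ) ∧
      (Int.gcd a b : ℤ) ^ 2 ∣ (a + b) * (Int.gcd (Int.gcd a b : ℤ) c : ℤ) ∧
      (Int.gcd b c : ℤ) ^ 2 ∣ (b + c) * (Int.gcd (Int.gcd a b : ℤ) c : ℤ)) :=
  lens_sequence_integrality_criterion_two_general a b c hb
end
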